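/- arXiv:2204.03079 — 3 statements merged into one kernel-verified Lean document; each statement's English description precedes it below -/
import Mathlib

section
/- Let G be a countable T1 topological group and let I be a weakly closed invariant ideal on G for which alternative (1) of IIA fails, i.e., there is no countable S ⊆ I such that every infinite sequence convergent in G meets some member of S in an infinite set. Let ⟨R_n : n ∈ ω⟩ be a sequence of large relations on G. Then there is a sequence C convergent to the identity 1_G such that R_n⁻¹[C \ F] ∈ I⁺ for every n ∈ ω and every finite F ⊆ G. -/
open Set Filter Topology TopologicalSpace

/-- A set `C` is an (infinite) sequence converging to `p`: it is infinite and
almost contained in every neighborhood of `p`. -/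
def IsConvSeqTo {X : Type*} [TopologicalSpace X] (C : Set X) (p : X) : Prop :=
  C.Infinite ∧ ∀ U ∈ nhds p, (C \ U).Finite

/-- A space is non-discrete if some point is not isolated. -/
def NonDiscrete (X : Type*) [TopologicalSpace X] : Prop :=
  ∃ x : X, ¬ IsOpen ({x} : Set X)

/-- An ideal of subsets: closed under subsets and finite unions, and containing
all finite sets. -/
def IsIdeal {α : Type*} (I : Set (Set α)) : Prop :=
  (∀ A B : Set α, A ⊆ B → B ∈ I → A ∈ I) ∧
  (∀ A ∈ I, ∀ B ∈ I, A ∪ B ∈ I) ∧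
  (∀ A : Set α, A.Finite → A ∈ I)

/-- A family `I` is ω-hitting if for every countable family of infinite sets
there is a member of `I` meeting each of them in an infinite set. -/
def OmegaHitting {α : Type*} (I : Set (Set α)) : Prop :=
  ∀ Y : ℕ → Set α, (∀ n, (Y n).Infinite) → ∃ A ∈ I, ∀ n, (Y n ∩ A).Infinite

/-- An ideal `I` on `α` is tame if for every `I`-positive set `Y`, every
`f : Y → ω` and every ω-hitting ideal `J` on `ω` there is `j ∈ J` whose
`f`-preimage (inside `Y`) is `I`-positive. -/
def Tame {α : Type*} (I : Set (Set α)) : Prop :=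
  ∀ Y : Set α, Y ∉ I → ∀ f : α → ℕ, ∀ J : Set (Set ℕ),
    IsIdeal J → OmegaHitting J → ∃ j ∈ J, Y ∩ f ⁻¹' j ∉ I

/-- `Y` is entangled if for every point `x`, the ideal
`I_x ↾ Y = {A ⊆ Y : x ∉ closure A}` is ω-hitting (on `Y`). -/
def Entangled {X : Type*} [TopologicalSpace X] (Y : Set X) : Prop :=
  ∀ x : X, ∀ Z : ℕ → Set X, (∀ n, Z n ⊆ Y ∧ (Z n).Infinite) →
    ∃ A : Set X, A ⊆ Y ∧ x ∉ closure A ∧ ∀ n, (Z n ∩ A).Infinite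

/-- A space is groomed if it contains no dense entangled subset. -/
def Groomed (X : Type*) [TopologicalSpace X] : Prop :=
  ¬ ∃ D : Set X, Dense D ∧ Entangled D

/-- An ideal on a group is invariant if it is closed under left and right
translations and under inversion. -/
def InvariantIdeal {G : Type*} [Group G] (I : Set (Set G)) : Prop :=
  ∀ A ∈ I, ∀ g : G,
    (fun h => g * h) '' A ∈ I ∧ (fun h => h * g) '' A ∈ I ∧ (fun h => h⁻¹) '' A ∈ I

/-- An ideal on a topological group is weakly closed if for every set `A` and
every sequence `C` converging to the identity,
`A ∈ I ↔ A ∪ {x : C·x ⊆* A} ∈ I`. -/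
def WeaklyClosed {G : Type*} [Group G] [TopologicalSpace G] (I : Set (Set G)) : Prop :=
  ∀ A C : Set G, IsConvSeqTo C 1 →
    (A ∈ I ↔ A ∪ {x : G | ((fun c => c * x) '' C \ A).Finite} ∈ I)

/-- Alternative (1) of IIA: a countable subfamily of `I` capturing (meeting
infinitely) every infinite convergent sequence. -/
def CapturesConvSeqs {G : Type*} [TopologicalSpace G] (I : Set (Set G)) : Prop :=
  ∃ S : Set (Set G), S.Countable ∧ S ⊆ I ∧
    ∀ C : Set G, ∀ p : G, IsConvSeqTo C p → ∃ A ∈ S, (C ∩ A).Infinite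

/-- Alternative (2) of IIA: a countable family of `I`-positive sets which is an
almost π-network: every non-empty open set contains one of them modulo `I`. -/
def HasAlmostPiNetwork {G : Type*} [TopologicalSpace G] (I : Set (Set G)) : Prop :=
  ∃ H : Set (Set G), H.Countable ∧ (∀ A ∈ H, A ∉ I) ∧
    ∀ U : Set G, IsOpen U → U.Nonempty → ∃ A ∈ H, A \ U ∈ I

/-- The Invariant Ideal Axiom: for every countable groomed topological group `G`
and every tame, weakly closed, invariant ideal on `G`, one of the two
alternatives holds. -/
def IIA : Prop :=
  ∀ (G : Type) [Group G] [TopologicalSpace G] [IsTopologicalGroup G] [T1Space G]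
    [Countable G], Groomed G →
    ∀ I : Set (Set G), IsIdeal I → Tame I → WeaklyClosed I → InvariantIdeal I →
      CapturesConvSeqs I ∨ HasAlmostPiNetwork I

/-- A set is scattered if every nonempty subset has a point isolated in it. -/
def IsScattered {X : Type*} [TopologicalSpace X] (A : Set X) : Prop :=
  ∀ B ⊆ A, B.Nonempty → ∃ x ∈ B, ∃ U : Set X, IsOpen U ∧ U ∩ B = {x}

/-- A set is closed discrete if it is closed and discrete as a subspace. -/
def IsClosedDiscrete {X : Type*} [TopologicalSpace X] (D : Set X) : Prop :=
  IsClosed D ∧ ∀ x ∈ D, ∃ U : Set X, IsOpen U ∧ U ∩ D = {x}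

/-- The ideal of nowhere dense subsets of `X`. -/
def nwdIdeal (X : Type*) [TopologicalSpace X] : Set (Set X) :=
  {A | IsNowhereDense A}

/-- The ideal generated by the compact subsets of `X`. -/
def cptIdeal (X : Type*) [TopologicalSpace X] : Set (Set X) :=
  {A | ∃ F : Set (Set X), F.Finite ∧ (∀ K ∈ F, IsCompact K) ∧ A ⊆ ⋃₀ F}

/-- The ideal generated by the closed scattered subsets of `X`. -/
def csctIdeal (X : Type*) [TopologicalSpace X] : Set (Set X) :=
  {A | ∃ F : Set (Set X), F.Finite ∧ (∀ K ∈ F, IsClosed K ∧ IsScattered K) ∧ A ⊆ ⋃₀ F}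

/-- A set is countably compact: every countable open cover has a finite subcover. -/
def IsCountablyCompact' {X : Type*} [TopologicalSpace X] (K : Set X) : Prop :=
  ∀ U : ℕ → Set X, (∀ n, IsOpen (U n)) → K ⊆ ⋃ n, U n →
    ∃ t : Finset ℕ, K ⊆ ⋃ n ∈ t, U n

/-- A `kω`-space: the topology is determined by a countable family of compact sets. -/
def IsKOmega (X : Type*) [TopologicalSpace X] : Prop :=
  ∃ K : ℕ → Set X, (∀ n, IsCompact (K n)) ∧
    ∀ U : Set X, IsOpen U ↔ ∀ n, ∃ V : Set X, IsOpen V ∧ U ∩ K n = V ∩ K n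

/-- A `cω`-space: the topology is determined by a countable family of countably
compact sets. -/
def IsCOmega (X : Type*) [TopologicalSpace X] : Prop :=
  ∃ K : ℕ → Set X, (∀ n, IsCountablyCompact' (K n)) ∧
    ∀ U : Set X, IsOpen U ↔ ∀ n, ∃ V : Set X, IsOpen V ∧ U ∩ K n = V ∩ K n

/-- A set is dense in itself if it has no points isolated in its subspace topology. -/
def DenseInItself {X : Type*} [TopologicalSpace X] (A : Set X) : Prop :=
  ∀ x ∈ A, x ∈ closure (A \ {x})

/-- A strict vD-network at `x`: a countable family of infinite closed discrete
sets, almost contained in every open neighborhood of `x` member-wise. -/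
def StrictVDNetwork {X : Type*} [TopologicalSpace X] (D : Set (Set X)) (x : X) : Prop :=
  D.Countable ∧ (∀ E ∈ D, E.Infinite ∧ IsClosedDiscrete E) ∧
    ∀ U : Set X, IsOpen U → x ∈ U → ∃ E ∈ D, (E \ U).Finite

/-- A relation `R ⊆ G × G` is large if for all `a b`, `(a,b) ∈ R` or `(a, a·b⁻¹) ∈ R`. -/
def IsLargeRel {G : Type*} [Group G] (R : Set (G × G)) : Prop :=
  ∀ a b : G, (a, b) ∈ R ∨ (a, a * b⁻¹) ∈ R

/-- `R⁻¹[B] = {a : (a,b) ∈ R for some b ∈ B}`. -/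
def relPreimage {G : Type*} (R : Set (G × G)) (B : Set G) : Set G :=
  {a | ∃ b ∈ B, (a, b) ∈ R}

/-!
Write `R⁻¹(b)` for the fiber of `R` over `b` and `B = {b : R⁻¹(b) ∈ I}`. Largeness of `R` at
`⟨c·x, x⟩` says that `c·x ∈ R⁻¹(x)` or `c·x ∈ R⁻¹(c)`. Hence if a sequence `C → 1` meets the
`I`-small set `R⁻¹(x)·x⁻¹` only finitely often for every `x ∈ B`, then `C·x ⊆* R⁻¹[C \ F]` for
all `x ∈ B`, and weak closedness turns `R⁻¹[C \ F] ∈ I` into `B ∈ I`. If moreover `C` meets `B`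
only finitely often, some `c ∈ C \ F` has `R⁻¹(c) ∉ I`, although `R⁻¹(c) ⊆ R⁻¹[C \ F]`.
Since alternative (1) fails, one `C` meets all these countably many members of `I` finitely.
-/

section Relations

variable {α : Type*}

def relFiber (R : Set (α × α)) (b : α) : Set α :=
  {a | (a, b) ∈ R}

def smallFibers (I : Set (Set α)) (R : Set (α × α)) : Set α :=
  {b | relFiber R b ∈ I}

theorem relFiber_subset_relPreimage {R : Set (α × α)} {B : Set α} {b : α} (hb : b ∈ B) :
    relFiber R b ⊆ relPreimage R B :=
  fun _ ha => ⟨b, hb, ha⟩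

end Relations

theorem IsLargeRel.mul_mem_relPreimage_or {G : Type*} [Group G] {R : Set (G × G)}
    (hR : IsLargeRel R) {B : Set G} {c : G} (hc : c ∈ B) (x : G) :
    c * x ∈ relPreimage R B ∨ c * x ∈ relFiber R x := by
  rcases hR (c * x) x with h | h
  · exact Or.inr h
  · exact Or.inl ⟨c, hc, by simpa using h⟩

theorem translate_diff_relPreimage_finite {G : Type*} [Group G] {R : Set (G × G)} {C F : Set G}
    (hR : IsLargeRel R) (hF : F.Finite) {x : G}
    (hCx : (C ∩ (· * x) ⁻¹' relFiber R x).Finite) :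
    ((· * x) '' C \ relPreimage R (C \ F)).Finite := by
  refine ((hCx.union hF).image (· * x)).subset ?_
  rintro _ ⟨⟨c, hc, rfl⟩, hcA⟩
  by_cases hcF : c ∈ F
  · exact ⟨c, Or.inr hcF, rfl⟩
  · refine ⟨c, Or.inl ⟨hc, ?_⟩, rfl⟩
    exact (hR.mul_mem_relPreimage_or (B := C \ F) ⟨hc, hcF⟩ x).resolve_left hcA

theorem InvariantIdeal.preimage_mul_right_mem {G : Type*} [Group G] {I : Set (Set G)}
    (hinv : InvariantIdeal I) {A : Set G} (hA : A ∈ I) (g : G) : (· * g) ⁻¹' A ∈ I := by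
  simpa only [Set.image_mul_right'] using (hinv A hA g⁻¹).2.1

section ConvSeq

variable {G : Type*} [Group G] [TopologicalSpace G]

theorem IsConvSeqTo.image_mul_right [ContinuousMul G] {C : Set G} {p : G}
    (hC : IsConvSeqTo C p) (g : G) : IsConvSeqTo ((· * g) '' C) (p * g) := by
  refine ⟨hC.1.image (mul_left_injective g).injOn, fun U hU => ?_⟩
  have hpre : (· * g) ⁻¹' U ∈ 𝓝 p :=
    (continuous_mul_const g).continuousAt.preimage_mem_nhds hU
  refine ((hC.2 _ hpre).image (· * g)).subset ?_
  rintro _ ⟨⟨c, hc, rfl⟩, hcU⟩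
  exact ⟨c, ⟨hc, hcU⟩, rfl⟩

/-- Closing `S` under right translations keeps it countable and inside `I`; a sequence
converging to `p` that escapes the translates, moved by `p⁻¹`, converges to `1` and escapes `S`. -/
theorem exists_isConvSeqTo_one_inter_finite [IsTopologicalGroup G] [Countable G]
    {I : Set (Set G)} (hinv : InvariantIdeal I) (hfail : ¬ CapturesConvSeqs I)
    {S : Set (Set G)} (hS : S.Countable) (hSI : S ⊆ I) :
    ∃ C : Set G, IsConvSeqTo C 1 ∧ ∀ A ∈ S, (C ∩ A).Finite := by
  set T : Set (Set G) := image2 (fun A g => (· * g) '' A) S univ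
  have hT : T.Countable := hS.image2 countable_univ _
  have hTI : T ⊆ I := by
    rintro _ ⟨A, hA, g, -, rfl⟩
    exact (hinv A (hSI hA) g).2.1
  obtain ⟨C, p, hCp, hCT⟩ : ∃ C : Set G, ∃ p : G, IsConvSeqTo C p ∧ ∀ A ∈ T, (C ∩ A).Finite := by
    by_contra! h
    exact hfail ⟨T, hT, hTI, h⟩
  refine ⟨(· * p⁻¹) '' C, by simpa using hCp.image_mul_right p⁻¹, fun A hA => ?_⟩
  refine ((hCT _ (mem_image2_of_mem hA (mem_univ p))).image (· * p⁻¹)).subset ?_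
  rintro _ ⟨⟨c, hc, rfl⟩, hcA⟩
  exact ⟨c, ⟨hc, c * p⁻¹, hcA, by simp⟩, rfl⟩

end ConvSeq

section LargeRelations

variable {G : Type*} [Group G] [TopologicalSpace G] {I : Set (Set G)} {R : Set (G × G)}
  {C F : Set G}

theorem smallFibers_mem_of_relPreimage_mem (hI : IsIdeal I) (hwc : WeaklyClosed I)
    (hR : IsLargeRel R) (hC : IsConvSeqTo C 1) (hF : F.Finite)
    (hCP : ∀ x ∈ smallFibers I R, (C ∩ (· * x) ⁻¹' relFiber R x).Finite)
    (hA : relPreimage R (C \ F) ∈ I) : smallFibers I R ∈ I :=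
  hI.1 _ _ (fun x hx => Or.inr (translate_diff_relPreimage_finite hR hF (hCP x hx)))
    ((hwc _ C hC).1 hA)

theorem relPreimage_diff_notMem (hI : IsIdeal I) (hwc : WeaklyClosed I)
    (hR : IsLargeRel R) (hC : IsConvSeqTo C 1) (hF : F.Finite)
    (hCB : smallFibers I R ∈ I → (C ∩ smallFibers I R).Finite)
    (hCP : ∀ x ∈ smallFibers I R, (C ∩ (· * x) ⁻¹' relFiber R x).Finite) :
    relPreimage R (C \ F) ∉ I := by
  intro hA
  have hB := smallFibers_mem_of_relPreimage_mem hI hwc hR hC hF hCP hA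
  obtain ⟨c, hcC, hc⟩ := (hC.1.sdiff ((hCB hB).union hF)).nonempty
  have hcF : c ∉ F := fun h => hc (Or.inr h)
  have hcB : relFiber R c ∉ I := fun h => hc (Or.inl ⟨hcC, h⟩)
  exact hcB (hI.1 _ _ (relFiber_subset_relPreimage (B := C \ F) ⟨hcC, hcF⟩) hA)

end LargeRelations

theorem statement5_general (G : Type*) [Group G] [TopologicalSpace G] [IsTopologicalGroup G]
    [Countable G] (I : Set (Set G)) (hI : IsIdeal I)
    (hwc : WeaklyClosed I) (hinv : InvariantIdeal I)
    (hfail : ¬ CapturesConvSeqs I)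
    (R : ℕ → Set (G × G)) (hR : ∀ n, IsLargeRel (R n)) :
    ∃ C : Set G, IsConvSeqTo C 1 ∧
      ∀ n : ℕ, ∀ F : Set G, F.Finite → relPreimage (R n) (C \ F) ∉ I := by
  set B : ℕ → Set G := fun n => smallFibers I (R n)
  set P : ℕ × G → Set G := fun q => (· * q.2) ⁻¹' relFiber (R q.1) q.2
  set S : Set (Set G) := (range B ∩ I) ∪ P '' {q | q.2 ∈ B q.1}
  have hS : S.Countable :=
    ((countable_range B).mono inter_subset_left).union ((to_countable _).image P)
  have hSI : S ⊆ I := by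
    rintro _ (hA | ⟨q, hq, rfl⟩)
    · exact hA.2
    · exact hinv.preimage_mul_right_mem hq q.2
  obtain ⟨C, hC, hCS⟩ := exists_isConvSeqTo_one_inter_finite hinv hfail hS hSI
  refine ⟨C, hC, fun n F hF => relPreimage_diff_notMem hI hwc (hR n) hC hF ?_ ?_⟩
  · exact fun hB => hCS _ (Or.inl ⟨⟨n, rfl⟩, hB⟩)
  · exact fun x hx => hCS _ (Or.inr ⟨(n, x), hx, rfl⟩)

/-- If alternative (1) of IIA fails for a weakly closed invariant
ideal `I` on a countable group `G`, then for every countable sequence of large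
relations `R n` there is a sequence `C → 1` with `Rₙ⁻¹[C \ F]` `I`-positive for
all `n` and all finite `F`. -/
theorem statement5 (G : Type*) [Group G] [TopologicalSpace G] [IsTopologicalGroup G]
    [T1Space G] [Countable G] (I : Set (Set G)) (hI : IsIdeal I)
    (hwc : WeaklyClosed I) (hinv : InvariantIdeal I)
    (hfail : ¬ CapturesConvSeqs I)
    (R : ℕ → Set (G × G)) (hR : ∀ n, IsLargeRel (R n)) :
    ∃ C : Set G, IsConvSeqTo C 1 ∧
      ∀ n : ℕ, ∀ F : Set G, F.Finite → relPreimage (R n) (C \ F) ∉ I :=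
  statement5_general G I hI hwc hinv hfail R hR
end

section
/- Let X be a countable sequential T1 topological space and let I be an ideal on X with the following properties: I contains all singletons; closure(I) ∈ I for every I ∈ I; and for every A ∈ I⁺ there is Y ⊆ A with Y ∈ I⁺ such that closure(Y \ I) = closure(Y) for every I ∈ I. Then I is tame. -/
open Set Filter Topology TopologicalSpace

/-!
Let `Y` be a kernel of the given positive set and suppose `Y ∩ f⁻¹ j ∈ I` for all `j ∈ J`.
Call `q` captured if some countable family of infinite subsets of `ω` has the property that
every `j` meeting all its members in infinite sets puts `q` in `closure (Y ∩ f⁻¹ j)`.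

Every point `q` of `Y` is captured. If `q` is in the closure of infinitely many fibres
`Y ∩ f⁻¹ {m}`, these `m` form such a family. Otherwise those finitely many fibres lie in `I`,
so `q` is in the closure of `A`, the part of `Y` outside their closure, while `q` is in the
closure of no fibre of `A`. In a sequential space every point of `closure A` is in the
closure of a fibre of `A` or is captured, as the points with this property form a
sequentially closed set containing `A`.

`Y` is countable, so the ω-hitting ideal `J` contains a single `j` hitting the families of all
points of `Y`, and then `Y ⊆ closure (Y ∩ f⁻¹ j) ∈ I`.
-/

section Capture

variable {X : Type*} [TopologicalSpace X]

def CapturedByHitting (S : Set X) (f : X → ℕ) (x : X) : Prop :=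
  ∃ Zs : Set (Set ℕ), Zs.Countable ∧ (∀ Z ∈ Zs, Z.Infinite) ∧
    ∀ j : Set ℕ, (∀ Z ∈ Zs, (Z ∩ j).Infinite) → x ∈ closure (S ∩ f ⁻¹' j)

variable {S A : Set X} {f : X → ℕ} {x : X}

theorem CapturedByHitting.mono {S' : Set X} (hS : S ⊆ S') (h : CapturedByHitting S f x) :
    CapturedByHitting S' f x := by
  obtain ⟨Zs, hc, hinf, hcap⟩ := h
  exact ⟨Zs, hc, hinf, fun j hj => closure_mono (inter_subset_inter_left _ hS) (hcap j hj)⟩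

theorem capturedByHitting_of_infinite {W : Set ℕ} (hW : W.Infinite)
    (hx : ∀ m ∈ W, x ∈ closure (S ∩ f ⁻¹' {m})) : CapturedByHitting S f x := by
  refine ⟨{W}, countable_singleton W, fun Z hZ => (mem_singleton_iff.1 hZ) ▸ hW, fun j hj => ?_⟩
  obtain ⟨m, hmW, hmj⟩ := (hj W rfl).nonempty
  exact closure_mono (inter_subset_inter_right _ (preimage_mono (singleton_subset_iff.2 hmj)))
    (hx m hmW)

theorem CapturedByHitting.of_frequently {u : ℕ → X} (hu : Tendsto u atTop (𝓝 x))
    (h : ∃ᶠ n in atTop, CapturedByHitting S f (u n)) : CapturedByHitting S f x := by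
  choose! Zs hc hinf hcap using fun n (hn : CapturedByHitting S f (u n)) => hn
  refine ⟨⋃ n, ⋃ (_ : CapturedByHitting S f (u n)), Zs n,
    countable_iUnion fun n => countable_iUnion fun hn => hc n hn, ?_, fun j hj => ?_⟩
  · simp only [mem_iUnion]
    rintro Z ⟨n, hn, hZ⟩
    exact hinf n hn Z hZ
  · have hfreq : ∃ᶠ n in atTop, u n ∈ closure (S ∩ f ⁻¹' j) :=
      h.mono fun n hn => hcap n hn j fun Z hZ => hj Z (mem_iUnion₂.2 ⟨n, hn, hZ⟩)
    simpa only [closure_closure] using mem_closure_of_frequently_of_tendsto hfreq hu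

theorem mem_closure_fiber_or_capturedByHitting_of_frequently {u : ℕ → X} {m : ℕ → ℕ}
    (hu : Tendsto u atTop (𝓝 x)) (h : ∃ᶠ n in atTop, u n ∈ closure (S ∩ f ⁻¹' {m n})) :
    (∃ k, x ∈ closure (S ∩ f ⁻¹' {k})) ∨ CapturedByHitting S f x := by
  set T := {n | u n ∈ closure (S ∩ f ⁻¹' {m n})}
  by_cases hV : (m '' T).Finite
  · left
    have hfreq : ∃ᶠ n in atTop, ∃ k ∈ m '' T, u n ∈ closure (S ∩ f ⁻¹' {k}) :=
      h.mono fun n hn => ⟨m n, mem_image_of_mem m hn, hn⟩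
    obtain ⟨k, -, hk⟩ := hV.frequently_exists.1 hfreq
    exact ⟨k, by simpa only [closure_closure] using mem_closure_of_frequently_of_tendsto hk hu⟩
  · right
    refine ⟨{m '' T}, countable_singleton _, fun Z hZ => (mem_singleton_iff.1 hZ) ▸ hV,
      fun j hj => ?_⟩
    have hinf : (T ∩ m ⁻¹' j).Infinite :=
      Infinite.of_image m (by simpa only [image_inter_preimage] using hj _ rfl)
    have hfreq : ∃ᶠ n in atTop, u n ∈ closure (S ∩ f ⁻¹' j) :=
      (Nat.frequently_atTop_iff_infinite.2 hinf).mono fun n ⟨hnT, hnj⟩ =>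
        closure_mono (inter_subset_inter_right S
          (preimage_mono (singleton_subset_iff.2 (show m n ∈ j from hnj)))) hnT
    simpa only [closure_closure] using mem_closure_of_frequently_of_tendsto hfreq hu

theorem isSeqClosed_setOf_mem_closure_fiber_or_capturedByHitting :
    IsSeqClosed {x | (∃ k, x ∈ closure (S ∩ f ⁻¹' {k})) ∨ CapturedByHitting S f x} := by
  intro u x hu hux
  rcases frequently_or_distrib.1 (Frequently.of_forall (f := atTop) hu) with hfib | hcap
  · choose! m hm using fun n (hn : ∃ k, u n ∈ closure (S ∩ f ⁻¹' {k})) => hn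
    exact mem_closure_fiber_or_capturedByHitting_of_frequently hux (hfib.mono hm)
  · exact Or.inr (CapturedByHitting.of_frequently hux hcap)

theorem mem_closure_fiber_or_capturedByHitting [SequentialSpace X] (hx : x ∈ closure A) :
    (∃ k, x ∈ closure (A ∩ f ⁻¹' {k})) ∨ CapturedByHitting A f x :=
  closure_minimal (fun y hy => Or.inl ⟨f y, subset_closure ⟨hy, rfl⟩⟩)
    isSeqClosed_setOf_mem_closure_fiber_or_capturedByHitting.isClosed hx

theorem capturedByHitting_of_closure_diff_eq [SequentialSpace X] {Y : Set X}
    (hY : ∀ W : Set ℕ, W.Finite → closure (Y \ closure (Y ∩ f ⁻¹' W)) = closure Y)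
    (hx : x ∈ closure Y) : CapturedByHitting Y f x := by
  set W := {m | x ∈ closure (Y ∩ f ⁻¹' {m})}
  by_cases hW : W.Infinite
  · exact capturedByHitting_of_infinite hW fun m hm => hm
  have hxA : x ∈ closure (Y \ closure (Y ∩ f ⁻¹' W)) := by
    rwa [hY W (not_infinite.1 hW)]
  rcases mem_closure_fiber_or_capturedByHitting (f := f) hxA with ⟨k, hk⟩ | hcap
  · have hkW : k ∈ W := closure_mono (inter_subset_inter_left _ sdiff_subset) hk
    have hempty : (Y \ closure (Y ∩ f ⁻¹' W)) ∩ f ⁻¹' {k} = ∅ := by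
      refine eq_empty_of_forall_notMem fun y ⟨⟨hyY, hy⟩, hyk⟩ => hy (subset_closure ⟨hyY, ?_⟩)
      rwa [mem_preimage, mem_singleton_iff.1 hyk]
    simp [hempty] at hk
  · exact hcap.mono sdiff_subset

end Capture

theorem OmegaHitting.exists_forall_inter_infinite {α : Type*} [Infinite α] {J : Set (Set α)}
    (hJ : OmegaHitting J) {Zs : Set (Set α)} (hc : Zs.Countable)
    (hinf : ∀ Z ∈ Zs, Z.Infinite) : ∃ j ∈ J, ∀ Z ∈ Zs, (Z ∩ j).Infinite := by
  obtain ⟨g, hg⟩ := (hc.insert univ).exists_eq_range (insert_nonempty _ _)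
  have hg_inf : ∀ n, (g n).Infinite := by
    intro n
    rcases (hg ▸ mem_range_self n : g n ∈ insert univ Zs) with h | h
    · exact h ▸ infinite_univ
    · exact hinf _ h
  obtain ⟨j, hjJ, hj⟩ := hJ g hg_inf
  refine ⟨j, hjJ, fun Z hZ => ?_⟩
  obtain ⟨n, rfl⟩ : Z ∈ range g := hg ▸ mem_insert_of_mem _ hZ
  exact hj n

theorem OmegaHitting.exists_subset_closure_of_capturedByHitting {X : Type*}
    [TopologicalSpace X] {J : Set (Set ℕ)} (hJ : OmegaHitting J) {Y S : Set X} {f : X → ℕ}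
    (hY : Y.Countable) (h : ∀ q ∈ Y, CapturedByHitting S f q) :
    ∃ j ∈ J, Y ⊆ closure (S ∩ f ⁻¹' j) := by
  choose! Zs hc hinf hcap using h
  obtain ⟨j, hjJ, hj⟩ := hJ.exists_forall_inter_infinite (hY.biUnion hc)
    fun Z hZ => by
      obtain ⟨q, hq, hZ⟩ := mem_iUnion₂.1 hZ
      exact hinf q hq Z hZ
  exact ⟨j, hjJ, fun q hq => hcap q hq j fun Z hZ => hj Z (mem_biUnion hq hZ)⟩

theorem statement9_general (X : Type*) [TopologicalSpace X] [Countable X]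
    [SequentialSpace X] (I : Set (Set X)) (hI : IsIdeal I)
    (hcl : ∀ A ∈ I, closure A ∈ I)
    (hker : ∀ A : Set X, A ∉ I →
      ∃ Y : Set X, Y ⊆ A ∧ Y ∉ I ∧ ∀ B ∈ I, closure (Y \ B) = closure Y) :
    Tame I := by
  intro Y₀ hY₀ f J hJ hJhit
  obtain ⟨Y, hYY₀, hY, hkerY⟩ := hker Y₀ hY₀
  by_contra! hsmall
  have hfib : ∀ j ∈ J, Y ∩ f ⁻¹' j ∈ I := fun j hj =>
    hI.1 _ _ (inter_subset_inter_left _ hYY₀) (hsmall j hj)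
  have hcap : ∀ q ∈ Y, CapturedByHitting Y f q := fun q hq =>
    capturedByHitting_of_closure_diff_eq
      (fun W hW => hkerY _ (hcl _ (hfib W (hJ.2.2 W hW)))) (subset_closure hq)
  obtain ⟨j, hjJ, hYj⟩ := hJhit.exists_subset_closure_of_capturedByHitting (to_countable Y) hcap
  exact hY (hI.1 _ _ hYj (hcl _ (hfib j hjJ)))

/-- an ideal on a countable sequential space containing all
singletons, closed under closures, and admitting kernels in positive sets, is
tame. -/
theorem statement9 (X : Type*) [TopologicalSpace X] [T1Space X] [Countable X]
    [SequentialSpace X] (I : Set (Set X)) (hI : IsIdeal I)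
    (hsing : ∀ x : X, {x} ∈ I)
    (hcl : ∀ A ∈ I, closure A ∈ I)
    (hker : ∀ A : Set X, A ∉ I →
      ∃ Y : Set X, Y ⊆ A ∧ Y ∉ I ∧ ∀ B ∈ I, closure (Y \ B) = closure Y) :
    Tame I :=
  statement9_general X I hI hcl hker
end

section
/- A countable T1 topological space X is groomed if and only if for every dense D ⊆ X there exists a point x ∈ X such that either there is an infinite sequence S ⊆ D converging to x, or there is a strict vD-network at x consisting of subsets of D. -/
open Set Filter Topology TopologicalSpace

/-! A convergent sequence inside `D`, or a strict vD-network at `x` of subsets of `D`, is a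
countable family of infinite subsets of `D` that no set whose closure misses `x` can hit, so `D`
is not entangled. Conversely, in a countable T1 space an infinite set with no convergent infinite
subset contains an infinite closed discrete set: diagonalise against an enumeration of the points,
choosing a shrinking sequence of infinite sets whose `k`-th term has a closure missing the `k`-th
point. If no point admits either witness inside `D`, shrink each member of a countable family of
infinite subsets of `D` to such a closed discrete set. The resulting family is not a strict
vD-network at `x`, so some neighbourhood `U` of `x` misses infinitely much of every member, and
`D \ U` hits the whole family. -/

section

variable {X : Type*} [TopologicalSpace X]

lemma IsConvSeqTo.mono {C S : Set X} {p : X} (hC : IsConvSeqTo C p) (hSC : S ⊆ C)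
    (hS : S.Infinite) : IsConvSeqTo S p :=
  ⟨hS, fun U hU => (hC.2 U hU).subset (sdiff_subset_sdiff_left hSC)⟩

lemma IsConvSeqTo.mem_closure {C : Set X} {p : X} (hC : IsConvSeqTo C p) : p ∈ closure C := by
  refine mem_closure_iff_nhds.mpr fun U hU => ?_
  have : (C \ (C \ U)).Infinite := hC.1.sdiff (hC.2 U hU)
  rw [sdiff_sdiff_right_self, inter_comm] at this
  exact this.nonempty

lemma exists_infinite_subset_notMem_closure {C : Set X} {p : X} (hC : C.Infinite)
    (h : ¬ IsConvSeqTo C p) : ∃ T ⊆ C, T.Infinite ∧ p ∉ closure T := by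
  obtain ⟨U, hU, hCU⟩ : ∃ U ∈ 𝓝 p, (C \ U).Infinite := by
    by_contra! hfin
    exact h ⟨hC, hfin⟩
  obtain ⟨V, hVU, hVo, hpV⟩ := mem_nhds_iff.mp hU
  refine ⟨C \ V, sdiff_subset, hCU.mono (sdiff_subset_sdiff_right hVU), fun hp => ?_⟩
  exact closure_minimal (sdiff_subset_compl C V) hVo.isClosed_compl hp hpV

lemma isClosedDiscrete_iff_compl_mem_codiscrete {C : Set X} :
    IsClosedDiscrete C ↔ Cᶜ ∈ codiscrete X := by
  rw [compl_mem_codiscrete_iff, isDiscrete_iff_forall_mem_exists_isOpen]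
  rfl

lemma isClosedDiscrete_of_forall_exists_finite [T1Space X] {C : Set X}
    (h : ∀ p, ∃ U ∈ 𝓝 p, (U ∩ C).Finite) : IsClosedDiscrete C := by
  rw [isClosedDiscrete_iff_compl_mem_codiscrete, codiscrete,
    codiscreteWithin_iff_locallyFiniteComplementWithin]
  simpa only [mem_univ, true_implies, ← compl_eq_univ_sdiff, compl_compl] using h

lemma isClosedDiscrete_range_of_forall_notMem_closure [T1Space X] {z : ℕ → X}
    {T : ℕ → Set X} (hzT : ∀ m i, m ≤ i → z i ∈ T m) (hT : ∀ p, ∃ m, p ∉ closure (T m)) :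
    IsClosedDiscrete (range z) := by
  refine isClosedDiscrete_of_forall_exists_finite fun p => ?_
  obtain ⟨m, hm⟩ := hT p
  refine ⟨(closure (T m))ᶜ, isClosed_closure.isOpen_compl.mem_nhds hm,
    ((finite_Iio m).image z).subset ?_⟩
  rintro _ ⟨hzi, i, rfl⟩
  refine ⟨i, not_le.mp fun hmi => hzi (subset_closure (hzT m i hmi)), rfl⟩

lemma exists_infinite_isClosedDiscrete_subset_of_forall_exists_notMem_closure
    [T1Space X] [Countable X] {Z : Set X} (hZ : Z.Infinite)
    (h : ∀ S ⊆ Z, S.Infinite → ∀ p, ∃ T ⊆ S, T.Infinite ∧ p ∉ closure T) :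
    ∃ C ⊆ Z, C.Infinite ∧ IsClosedDiscrete C := by
  have : Nonempty X := hZ.nonempty.to_subtype.map Subtype.val
  obtain ⟨e, he⟩ := exists_surjective_nat X
  choose! shrink hshrink_sub hshrink_inf hshrink_cl using h
  let pick (T : Set X) : X := Classical.epsilon (· ∈ T)
  -- removing the chosen point `pick _` at each step makes the resulting sequence injective
  let S : ℕ → Set X := fun n =>
    Nat.rec Z (fun k S => shrink S (e k) \ {pick (shrink S (e k))}) n
  let T k := shrink (S k) (e k)
  let z k := pick (T k)
  have hS : ∀ k, S k ⊆ Z ∧ (S k).Infinite := by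
    intro k
    induction k with
    | zero => exact ⟨subset_rfl, hZ⟩
    | succ k ih =>
      exact ⟨sdiff_subset.trans ((hshrink_sub _ ih.1 ih.2 _).trans ih.1),
        (hshrink_inf _ ih.1 ih.2 _).sdiff (finite_singleton _)⟩
  have hTS k : T k ⊆ S k := hshrink_sub _ (hS k).1 (hS k).2 _
  have hzT k : z k ∈ T k := Classical.epsilon_spec (hshrink_inf _ (hS k).1 (hS k).2 _).nonempty
  have hS_anti : Antitone S := antitone_nat_of_succ_le fun k => sdiff_subset.trans (hTS k)
  have hz_tail m i (hmi : m < i) : z i ∈ T m \ {z m} := hS_anti hmi (hTS i (hzT i))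
  refine ⟨range z, ?_, infinite_range_of_injective ?_, ?_⟩
  · rintro _ ⟨k, rfl⟩
    exact (hS k).1 (hTS k (hzT k))
  · exact Function.Injective.of_lt_imp_ne fun m i hmi => Ne.symm (hz_tail m i hmi).2
  · refine isClosedDiscrete_range_of_forall_notMem_closure (T := T) (fun m i hmi => ?_) fun p => ?_
    · rcases hmi.lt_or_eq with hmi | rfl
      exacts [(hz_tail m i hmi).1, hzT m]
    · obtain ⟨k, rfl⟩ := he p
      exact ⟨k, hshrink_cl _ (hS k).1 (hS k).2 _⟩

lemma exists_infinite_isClosedDiscrete_subset [T1Space X] [Countable X] {Z : Set X}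
    (hZ : Z.Infinite) (h : ∀ S ⊆ Z, ∀ p, ¬ IsConvSeqTo S p) :
    ∃ C ⊆ Z, C.Infinite ∧ IsClosedDiscrete C :=
  exists_infinite_isClosedDiscrete_subset_of_forall_exists_notMem_closure hZ
    fun S hSZ hS p => exists_infinite_subset_notMem_closure hS (h S hSZ p)

lemma StrictVDNetwork.exists_finite_inter {F : Set (Set X)} {x : X} (hF : StrictVDNetwork F x)
    {A : Set X} (hA : x ∉ closure A) : ∃ E ∈ F, (E ∩ A).Finite := by
  obtain ⟨E, hE, hEU⟩ := hF.2.2 _ isClosed_closure.isOpen_compl hA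
  exact ⟨E, hE, hEU.subset fun a ha => ⟨ha.1, not_not.mpr (subset_closure ha.2)⟩⟩

namespace Entangled

variable {D : Set X} (hD : Entangled D) {x : X}
include hD

lemma not_isConvSeqTo {S : Set X} (hSD : S ⊆ D) : ¬ IsConvSeqTo S x := fun hS => by
  obtain ⟨A, -, hA, hSA⟩ := hD x (fun _ => S) fun _ => ⟨hSD, hS.1⟩
  exact hA (closure_mono inter_subset_right ((hS.mono inter_subset_left (hSA 0)).mem_closure))

lemma not_strictVDNetwork {F : Set (Set X)} (hFD : ∀ E ∈ F, E ⊆ D) :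
    ¬ StrictVDNetwork F x := fun hF => by
  obtain ⟨E₀, hE₀, -⟩ := hF.2.2 univ isOpen_univ (mem_univ x)
  obtain ⟨f, rfl⟩ := hF.1.exists_eq_range ⟨E₀, hE₀⟩
  obtain ⟨A, -, hA, hfA⟩ := hD x f fun n => ⟨hFD _ ⟨n, rfl⟩, (hF.2.1 _ ⟨n, rfl⟩).1⟩
  obtain ⟨_, ⟨n, rfl⟩, hfin⟩ := hF.exists_finite_inter hA
  exact hfA n hfin

end Entangled

lemma entangled_of_forall_not_isConvSeqTo_of_not_strictVDNetwork [T1Space X] [Countable X]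
    {D : Set X} (hconv : ∀ S ⊆ D, ∀ p, ¬ IsConvSeqTo S p)
    (hnet : ∀ x, ∀ F : Set (Set X), (∀ E ∈ F, E ⊆ D) → ¬ StrictVDNetwork F x) :
    Entangled D := by
  intro x Z hZ
  choose C hCZ hC hCcd using fun n =>
    exists_infinite_isClosedDiscrete_subset (hZ n).2 fun S hS => hconv S (hS.trans (hZ n).1)
  obtain ⟨U, hUo, hxU, hCU⟩ : ∃ U, IsOpen U ∧ x ∈ U ∧ ∀ n, (C n \ U).Infinite := by
    have := hnet x (range C) (by rintro _ ⟨n, rfl⟩; exact (hCZ n).trans (hZ n).1)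
    simpa [StrictVDNetwork, countable_range, hC, hCcd] using this
  refine ⟨D \ U, sdiff_subset, fun hx => ?_, fun n => (hCU n).mono ?_⟩
  · exact closure_minimal (sdiff_subset_compl D U) hUo.isClosed_compl hx hxU
  · exact fun a ha => ⟨hCZ n ha.1, (hZ n).1 (hCZ n ha.1), ha.2⟩

end

/-- a countable space is groomed iff every dense set admits a
point with either an infinite convergent sequence inside the dense set, or a
strict vD-network consisting of subsets of the dense set. -/
theorem statement16 (X : Type*) [TopologicalSpace X] [T1Space X] [Countable X] :
    Groomed X ↔ ∀ D : Set X, Dense D → ∃ x : X,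
      (∃ S : Set X, S ⊆ D ∧ IsConvSeqTo S x) ∨
      (∃ F : Set (Set X), (∀ E ∈ F, E ⊆ D) ∧ StrictVDNetwork F x) := by
  constructor
  · intro hX D hD
    by_contra! h
    exact hX ⟨D, hD, entangled_of_forall_not_isConvSeqTo_of_not_strictVDNetwork
      (fun S hSD p hS => (h p).1 S hSD hS) fun x F hFD hF => (h x).2 F hFD hF⟩
  · rintro h ⟨D, hD, hent⟩
    obtain ⟨x, ⟨S, hSD, hS⟩ | ⟨F, hFD, hF⟩⟩ := h D hD
    exacts [hent.not_isConvSeqTo hSD hS, hent.not_strictVDNetwork hFD hF]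
end
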